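/- For every crossed module (μ : M → P) and every group homomorphism ι : P → Q, an induced crossed module of (μ : M → P) along ι exists: there is a crossed module (∂ : I → Q) and a morphism of crossed modules (j, ι) : (μ : M → P) → (∂ : I → Q) such that for every crossed module (ν : N → Q) and every morphism of crossed modules (f, ι) : (μ : M → P) → (ν : N → Q), there is a unique group homomorphism φ : I → N satisfying ν ∘ φ = ∂, φ(x^q) = (φ x)^q for all x ∈ I, q ∈ Q, and φ ∘ j = f. -/
import Mathlib


universe u

/-- A crossed module `(μ : M → P)`: groups `M`, `P`, a (right) action of `P` on `M` by
group automorphisms, written `act m p` for `m ^ p`, and a homomorphism `μ : M →* P`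
satisfying CM1: `μ (m ^ p) = p⁻¹ * μ m * p` and CM2: `n ^ (μ m) = m⁻¹ * n * m`. -/
structure CrossedModule (M P : Type u) [Group M] [Group P] where
  μ : M →* P
  act : M → P → M
  act_mul : ∀ m n p, act (m * n) p = act m p * act n p
  act_one : ∀ m, act m 1 = m
  act_act : ∀ m p q, act (act m p) q = act m (p * q)
  cm1 : ∀ m p, μ (act m p) = p⁻¹ * μ m * p
  cm2 : ∀ m n, act n (μ m) = m⁻¹ * n * m

/-- A morphism of crossed modules `(f, g) : (μ : M → P) → (ν : N → Q)`:
group homomorphisms `f : M → N`, `g : P → Q` with `ν ∘ f = g ∘ μ` and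
`f (m ^ p) = (f m) ^ (g p)`. -/
def CrossedModule.IsMorphism {M P N Q : Type u} [Group M] [Group P] [Group N] [Group Q]
    (X : CrossedModule M P) (Y : CrossedModule N Q) (f : M →* N) (g : P →* Q) : Prop :=
  (∀ m, Y.μ (f m) = g (X.μ m)) ∧ ∀ m p, f (X.act m p) = Y.act (f m) (g p)

/-- `(∂ : I → Q)` together with `j : M → I` is an induced crossed module of `(μ : M → P)`
along `ι : P → Q`: `(j, ι)` is a morphism of crossed modules, and for every crossed module
`(ν : N → Q)` and morphism `(f, ι) : (μ : M → P) → (ν : N → Q)` there is a unique group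
homomorphism `φ : I → N` with `ν ∘ φ = ∂`, `φ (x ^ q) = (φ x) ^ q`, and `φ ∘ j = f`. -/
def IsInducedCrossedModule {M P Q I : Type u} [Group M] [Group P] [Group Q] [Group I]
    (X : CrossedModule M P) (ι : P →* Q) (Y : CrossedModule I Q) (j : M →* I) : Prop :=
  CrossedModule.IsMorphism X Y j ι ∧
  ∀ (N : Type u) [Group N] (Z : CrossedModule N Q) (f : M →* N),
    CrossedModule.IsMorphism X Z f ι →
    ∃! φ : I →* N, (∀ x, Z.μ (φ x) = Y.μ x) ∧
      (∀ x q, φ (Y.act x q) = Z.act (φ x) q) ∧ ∀ m, φ (j m) = f m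

namespace InducedCMAux

variable {M P Q : Type u} [Group M] [Group P] [Group Q]

/-- Relations for the induced crossed module presentation on generators `M × Q`. -/
def rels (X : CrossedModule M P) (ι : P →* Q) : Set (FreeGroup (M × Q)) :=
  { w | (∃ m n q, w = FreeGroup.of (m * n, q) * (FreeGroup.of (m, q) * FreeGroup.of (n, q))⁻¹) ∨
        (∃ m p q, w = FreeGroup.of (X.act m p, q) * (FreeGroup.of (m, ι p * q))⁻¹) ∨
        (∃ m n q r, w = FreeGroup.of (n, r * (q⁻¹ * ι (X.μ m) * q)) *
          ((FreeGroup.of (m, q))⁻¹ * FreeGroup.of (n, r) * FreeGroup.of (m, q))⁻¹) }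

theorem lift_rels_eq_one {G : Type*} [Group G] {X : CrossedModule M P} {ι : P →* Q}
    {g : M × Q → G}
    (h1 : ∀ m n q, g (m * n, q) = g (m, q) * g (n, q))
    (h2 : ∀ m p q, g (X.act m p, q) = g (m, ι p * q))
    (h3 : ∀ m n q r, g (n, r * (q⁻¹ * ι (X.μ m) * q)) = (g (m, q))⁻¹ * g (n, r) * g (m, q)) :
    ∀ w ∈ rels X ι, FreeGroup.lift g w = 1 := by
  rintro w (⟨m, n, q, rfl⟩ | ⟨m, p, q, rfl⟩ | ⟨m, n, q, r, rfl⟩) <;>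
    simp [h1, h2, h3] <;> group

variable (X : CrossedModule M P) (ι : P →* Q)

/-- The generators of the induced crossed module. -/
abbrev gen (m : M) (q : Q) : PresentedGroup (rels X ι) := PresentedGroup.of (m, q)

theorem mk_rel_eq_one {w : FreeGroup (M × Q)} (h : w ∈ rels X ι) :
    PresentedGroup.mk (rels X ι) w = 1 :=
  (QuotientGroup.eq_one_iff _).2 (Subgroup.subset_normalClosure h)

theorem gen_mul (m n : M) (q : Q) : gen X ι (m * n) q = gen X ι m q * gen X ι n q := by
  have h := mk_rel_eq_one X ι (Or.inl ⟨m, n, q, rfl⟩)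
  rw [map_mul, map_inv, map_mul, mul_inv_eq_one] at h
  exact h

theorem gen_act (m : M) (p : P) (q : Q) : gen X ι (X.act m p) q = gen X ι m (ι p * q) := by
  have h := mk_rel_eq_one X ι (Or.inr (Or.inl ⟨m, p, q, rfl⟩))
  rw [map_mul, map_inv, mul_inv_eq_one] at h
  exact h

theorem gen_peiffer (m n : M) (q r : Q) :
    gen X ι n (r * (q⁻¹ * ι (X.μ m) * q)) =
      (gen X ι m q)⁻¹ * gen X ι n r * gen X ι m q := by
  have h := mk_rel_eq_one X ι (Or.inr (Or.inr ⟨m, n, q, r, rfl⟩))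
  rw [map_mul, map_inv, map_mul, map_mul, map_inv, mul_inv_eq_one] at h
  exact h

/-- The boundary map `∂ : I →* Q`. -/
def bd : PresentedGroup (rels X ι) →* Q :=
  PresentedGroup.toGroup (f := fun x : M × Q => x.2⁻¹ * ι (X.μ x.1) * x.2)
    (lift_rels_eq_one
      (by intro m n q; simp [map_mul]; group)
      (by intro m p q; simp [X.cm1, map_mul, map_inv]; group)
      (by intro m n q r; group))

@[simp] theorem bd_gen (m : M) (q : Q) : bd X ι (gen X ι m q) = q⁻¹ * ι (X.μ m) * q :=
  PresentedGroup.toGroup.of _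

/-- The action of `s : Q` on the induced crossed module, as a homomorphism. -/
def psi (s : Q) : PresentedGroup (rels X ι) →* PresentedGroup (rels X ι) :=
  PresentedGroup.toGroup (f := fun x : M × Q => gen X ι x.1 (x.2 * s))
    (lift_rels_eq_one
      (by intro m n q; exact gen_mul X ι m n (q * s))
      (by intro m p q; show gen X ι (X.act m p) (q * s) = gen X ι m (ι p * q * s)
          rw [gen_act, mul_assoc])
      (by intro m n q r
          show gen X ι n (r * (q⁻¹ * ι (X.μ m) * q) * s) = _
          rw [show r * (q⁻¹ * ι (X.μ m) * q) * s
              = r * s * ((q * s)⁻¹ * ι (X.μ m) * (q * s)) by group,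
            gen_peiffer]))

@[simp] theorem psi_gen (s : Q) (m : M) (q : Q) :
    psi X ι s (gen X ι m q) = gen X ι m (q * s) :=
  PresentedGroup.toGroup.of _

theorem psi_one (x : PresentedGroup (rels X ι)) : psi X ι 1 x = x := by
  have h : psi X ι 1 = MonoidHom.id _ :=
    PresentedGroup.ext (fun ⟨m, q⟩ => by simp)
  rw [h]; rfl

theorem psi_psi (s t : Q) (x : PresentedGroup (rels X ι)) :
    psi X ι s (psi X ι t x) = psi X ι (t * s) x := by
  have h : (psi X ι s).comp (psi X ι t) = psi X ι (t * s) :=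
    PresentedGroup.ext (fun ⟨m, q⟩ => by simp [mul_assoc])
  exact DFunLike.congr_fun h x

theorem cm2_aux (x y : PresentedGroup (rels X ι)) :
    psi X ι (bd X ι x) y = x⁻¹ * y * x := by
  refine PresentedGroup.generated_by _
    ({ carrier := {a | ∀ y, psi X ι (bd X ι a) y = a⁻¹ * y * a}
       one_mem' := by intro y; simp [psi_one]
       mul_mem' := by
         intro a b ha hb y
         rw [map_mul, ← psi_psi, ha, hb]
         group
       inv_mem' := by
         intro a ha y
         have h2 : psi X ι (bd X ι a) (a * y * a⁻¹) = y := by rw [ha (a * y * a⁻¹)]; group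
         have h3 : psi X ι (bd X ι a⁻¹) y = a * y * a⁻¹ := by
           rw [map_inv]
           conv_lhs => rw [← h2]
           rw [psi_psi]
           simp [psi_one]
         rw [h3]; group }) ?_ x y
  rintro ⟨m, q⟩ y
  have h : psi X ι (q⁻¹ * ι (X.μ m) * q)
      = (MulAut.conj (gen X ι m q)⁻¹).toMonoidHom :=
    PresentedGroup.ext (fun ⟨n, r⟩ => by
      simp only [psi_gen, MulEquiv.coe_toMonoidHom, MulAut.conj_apply, inv_inv]
      exact gen_peiffer X ι m n q r)
  show psi X ι (bd X ι (gen X ι m q)) y = _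
  rw [bd_gen, h]
  simp [MulAut.conj_apply]

/-- The induced crossed module. -/
def indCM : CrossedModule (PresentedGroup (rels X ι)) Q where
  μ := bd X ι
  act x s := psi X ι s x
  act_mul := fun m n p => map_mul (psi X ι p) m n
  act_one := psi_one X ι
  act_act := fun m p q => psi_psi X ι q p m
  cm1 := by
    intro x s
    have h : (bd X ι).comp (psi X ι s)
        = ((MulAut.conj s⁻¹).toMonoidHom).comp (bd X ι) :=
      PresentedGroup.ext (fun ⟨m, q⟩ => by
        simp only [MonoidHom.comp_apply, psi_gen, bd_gen, MulEquiv.coe_toMonoidHom,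
          MulAut.conj_apply, inv_inv]
        group)
    have := DFunLike.congr_fun h x
    simpa [MulAut.conj_apply] using this
  cm2 := fun m n => cm2_aux X ι m n

/-- The canonical map `j : M →* I`. -/
def jHom : M →* PresentedGroup (rels X ι) :=
  MonoidHom.mk' (fun m => gen X ι m 1) (fun m n => gen_mul X ι m n 1)

/-- The first-argument action homomorphism of a crossed module. -/
def actHom {N : Type u} [Group N] (Z : CrossedModule N Q) (q : Q) : N →* N :=
  MonoidHom.mk' (fun n => Z.act n q) (fun a b => Z.act_mul a b q)

end InducedCMAux

/-- For every crossed module `(μ : M → P)` and every group homomorphism `ι : P → Q`,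
an induced crossed module of `(μ : M → P)` along `ι` exists. -/
theorem inducedCrossedModule_exists {M P Q : Type u} [Group M] [Group P] [Group Q]
    (X : CrossedModule M P) (ι : P →* Q) :
    ∃ (I : Type u) (gI : Group I),
      letI := gI
      ∃ (Y : CrossedModule I Q) (j : M →* I), IsInducedCrossedModule X ι Y j := by
  open InducedCMAux in
  refine ⟨PresentedGroup (rels X ι), inferInstance, indCM X ι, jHom X ι, ⟨?_, ?_⟩, ?_⟩
  · -- boundary condition of the morphism `(j, ι)`
    intro m
    show bd X ι (gen X ι m 1) = ι (X.μ m)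
    simp
  · -- action condition of the morphism `(j, ι)`
    intro m p
    show gen X ι (X.act m p) 1 = psi X ι (ι p) (gen X ι m 1)
    simp [gen_act]
  · -- universal property
    intro N _ Z f hf
    have hact : ∀ (a : N) (s : Q), Z.act a⁻¹ s = (Z.act a s)⁻¹ :=
      fun a s => map_inv (actHom Z s) a
    have h3 : ∀ (m n : M) (q r : Q),
        Z.act (f n) (r * (q⁻¹ * ι (X.μ m) * q))
          = (Z.act (f m) q)⁻¹ * Z.act (f n) r * Z.act (f m) q := by
      intro m n q r
      rw [show r * (q⁻¹ * ι (X.μ m) * q) = r * q⁻¹ * ι (X.μ m) * q by group,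
        ← Z.act_act, ← Z.act_act, ← hf.1 m, Z.cm2]
      rw [Z.act_mul, Z.act_mul, hact, Z.act_act, inv_mul_cancel_right]
    have hrels : ∀ w ∈ rels X ι,
        FreeGroup.lift (fun x : M × Q => Z.act (f x.1) x.2) w = 1 :=
      lift_rels_eq_one
        (by intro m n q; show Z.act (f (m * n)) q = _; rw [map_mul, Z.act_mul])
        (by intro m p q; show Z.act (f (X.act m p)) q = _; rw [hf.2, Z.act_act])
        (fun m n q r => h3 m n q r)
    refine ⟨PresentedGroup.toGroup hrels, ⟨?_, ?_, ?_⟩, ?_⟩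
    · intro x
      have h : Z.μ.comp (PresentedGroup.toGroup hrels) = bd X ι :=
        PresentedGroup.ext (fun ⟨m, q⟩ => by
          simp only [MonoidHom.comp_apply, PresentedGroup.toGroup.of, bd_gen]
          rw [Z.cm1, hf.1])
      exact DFunLike.congr_fun h x
    · intro x q
      have h : (PresentedGroup.toGroup hrels).comp (psi X ι q)
          = (actHom Z q).comp (PresentedGroup.toGroup hrels) :=
        PresentedGroup.ext (fun ⟨m, r⟩ => by
          show PresentedGroup.toGroup hrels (psi X ι q (gen X ι m r))
            = actHom Z q (PresentedGroup.toGroup hrels (gen X ι m r))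
          rw [psi_gen, PresentedGroup.toGroup.of, PresentedGroup.toGroup.of]
          show Z.act (f m) (r * q) = Z.act (Z.act (f m) r) q
          rw [Z.act_act])
      exact DFunLike.congr_fun h x
    · intro m
      show PresentedGroup.toGroup hrels (gen X ι m 1) = f m
      rw [PresentedGroup.toGroup.of]
      exact Z.act_one (f m)
    · intro φ' ⟨_, hφ2, hφ3⟩
      refine PresentedGroup.ext (fun ⟨m, q⟩ => ?_)
      have hgen : (PresentedGroup.of (m, q) : PresentedGroup (rels X ι))
          = (indCM X ι).act (jHom X ι m) q := by
        show gen X ι m q = psi X ι q (gen X ι m 1)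
        rw [psi_gen, one_mul]
      rw [hgen, hφ2, hφ3]
      show Z.act (f m) q = PresentedGroup.toGroup hrels (psi X ι q (gen X ι m 1))
      rw [psi_gen, one_mul, PresentedGroup.toGroup.of]
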